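/- For nonnegative integers i ≥ j and r ≥ 0, [i+r, j+r]_r = Σ_{k=j}^{i} (-1)^{k-j} C(k,j) [i+r+1, k+r+1]_{r+1}, where [n,m]_r denotes the unsigned r-Stirling number of the first kind. -/

import Mathlib

/-!
The generating polynomial `∑ⱼ [i+r, j+r]_r Xʲ = (X+r)(X+r+1)⋯(X+r+i-1)` is the rising
factorial `ascPochhammer i` shifted by `r`. Shifting the `(r+1)`-polynomial back by `-1` gives the
`r`-polynomial, and the coefficients of `p(X-1)` are `∑ₖ (-1)^(k-j) C(k,j) pₖ`.
-/

open Finset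

/-- The unsigned `r`-Stirling numbers of the first kind: `rS1 r i j = [i+r, j+r]_r`,
characterized by `∑_j [i+r, j+r]_r x^j = (x+r)(x+r+1)⋯(x+r+i-1)`. -/
def rS1 (r : ℕ) : ℕ → ℕ → ℕ
  | 0, 0 => 1
  | 0, _ + 1 => 0
  | i + 1, 0 => (r + i) * rS1 r i 0
  | i + 1, j + 1 => (r + i) * rS1 r i (j + 1) + rS1 r i j

open Polynomial

theorem coeff_taylor_eq_sum_Icc {R : Type*} [CommSemiring R] (c : R) {p : R[X]} {n : ℕ}
    (hp : p.natDegree ≤ n) (j : ℕ) :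
    (taylor c p).coeff j = ∑ k ∈ Icc j n, c ^ (k - j) * k.choose j * p.coeff k := by
  conv_lhs => rw [p.as_sum_range_C_mul_X_pow' (Nat.lt_succ_of_le hp)]
  simp only [map_sum, taylor_mul, taylor_C, taylor_X_pow, finsetSum_coeff, coeff_C_mul,
    coeff_X_add_C_pow, Nat.range_succ_eq_Icc_zero]
  symm
  refine sum_subset_zero_on_sdiff (Icc_subset_Icc (Nat.zero_le j) le_rfl) (fun k hk => ?_)
    fun k _ => by ring
  rw [mem_sdiff, mem_Icc, mem_Icc] at hk
  rw [Nat.choose_eq_zero_of_lt (by omega), Nat.cast_zero, mul_zero, mul_zero]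

theorem coeff_taylor_natCast_ascPochhammer {R : Type*} [CommSemiring R] (r i j : ℕ) :
    (taylor (r : R) (ascPochhammer R i)).coeff j = rS1 r i j := by
  induction i generalizing j with
  | zero => cases j <;> simp [rS1, coeff_one]
  | succ i ih =>
    have hfactor : taylor (r : R) (X + (i : R[X])) = X + C ((r + i : ℕ) : R) := by
      rw [map_add, taylor_X, ← C_eq_natCast, taylor_C, add_assoc, ← C_add, Nat.cast_add]
    rw [ascPochhammer_succ_right, taylor_mul, hfactor, mul_add, coeff_add, coeff_mul_C]
    cases j with
    | zero => simp [rS1, ih, mul_comm]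
    | succ j => simp [rS1, ih, coeff_mul_X]; ring

theorem rStirlingFirst_alternating_recurrence_general (i j r : ℕ) :
    (rS1 r i j : ℤ) =
      ∑ k ∈ Finset.Icc j i, (-1) ^ (k - j) * (k.choose j : ℤ) * (rS1 (r + 1) i k : ℤ) := by
  have hshift : taylor (-1) (taylor ((r + 1 : ℕ) : ℤ) (ascPochhammer ℤ i)) =
      taylor (r : ℤ) (ascPochhammer ℤ i) := by
    rw [taylor_taylor]; push_cast; ring_nf
  have hdeg : (taylor ((r + 1 : ℕ) : ℤ) (ascPochhammer ℤ i)).natDegree ≤ i := by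
    rw [natDegree_taylor, ascPochhammer_natDegree]
  rw [← coeff_taylor_natCast_ascPochhammer, ← hshift, coeff_taylor_eq_sum_Icc (-1) hdeg]
  simp only [coeff_taylor_natCast_ascPochhammer]

theorem rStirlingFirst_alternating_recurrence (i j r : ℕ) (hij : j ≤ i) :
    (rS1 r i j : ℤ) =
      ∑ k ∈ Finset.Icc j i, (-1) ^ (k - j) * (k.choose j : ℤ) * (rS1 (r + 1) i k : ℤ) :=
  rStirlingFirst_alternating_recurrence_general i j r
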